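/- arXiv:2310.07430 — 2 statements merged into one kernel-verified Lean document; each statement's English description precedes it below -/
import Mathlib

section
/- Let M be a diagonalizable matrix with orthonormal eigenvectors ν_1, ..., ν_n and real eigenvalues satisfying λ_1 > |λ_2| ≥ ... ≥ |λ_n| ≥ 0. Let x = Σ c_i ν_i with c_1 ≠ 0. Then the normalized power iterates M^k x / ||M^k x|| converge to sign(c_1) ν_1 as k → ∞; moreover for any ε > 0 there exists K such that for all k ≥ K, ||M^k x / ||M^k x|| − sign(c_1) ν_1||_2 < ε. -/
/-!
Since `λ₁ > 0`, dividing `M^k x = ∑ cₐ λₐ^k νₐ` by `λ₁^k` does not change its normalization, and the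
rescaled vector `∑ cₐ (λₐ/λ₁)^k νₐ` tends to `c₁ ν₁ ≠ 0` because `|λₐ/λ₁| < 1` for `a ≠ 1`.
Normalization is continuous away from `0`, so the normalized iterates tend to
`normalize (c₁ ν₁) = sign(c₁) ν₁`.
-/

open Filter Topology NormedSpace
open scoped Matrix

theorem NormedSpace.normalize_smul_eq_sign_smul {V : Type*} [NormedAddCommGroup V]
    [NormedSpace ℝ V] (r : ℝ) (x : V) : normalize (r • x) = Real.sign r • normalize x := by
  rcases lt_trichotomy r 0 with hr | rfl | hr
  · simp [normalize_smul_of_neg hr, Real.sign_of_neg hr]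
  · simp
  · simp [normalize_smul_of_pos hr, Real.sign_of_pos hr]

theorem NormedSpace.continuousAt_normalize {V : Type*} [NormedAddCommGroup V]
    [NormedSpace ℝ V] {x : V} (hx : x ≠ 0) : ContinuousAt normalize x :=
  (continuous_norm.continuousAt.inv₀ (norm_ne_zero_iff.2 hx)).smul continuousAt_id

theorem Matrix.pow_mulVec_sum_smul {m ι R : Type*} [Fintype m] [DecidableEq m] [Fintype ι]
    [CommSemiring R] (M : Matrix m m R) (ν : ι → m → R) (lam : ι → R)
    (heig : ∀ a, M *ᵥ ν a = lam a • ν a) (c : ι → R) (k : ℕ) :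
    (M ^ k) *ᵥ ∑ a, c a • ν a = ∑ a, (c a * lam a ^ k) • ν a := by
  induction k with
  | zero => simp
  | succ k ih =>
    rw [pow_succ', ← Matrix.mulVec_mulVec, ih, Matrix.mulVec_sum]
    refine Finset.sum_congr rfl fun a _ => ?_
    rw [Matrix.mulVec_smul, heig, smul_smul, pow_succ]
    ring_nf

theorem tendsto_pow_div_pow_of_abs_lt {μ lam : ℝ} (h : |μ| < lam) :
    Tendsto (fun k : ℕ => (μ / lam) ^ k) atTop (𝓝 0) := by
  have hlam : 0 < lam := (abs_nonneg μ).trans_lt h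
  refine tendsto_pow_atTop_nhds_zero_of_abs_lt_one ?_
  rwa [abs_div, abs_of_pos hlam, div_lt_one hlam]

theorem tendsto_normalize_sum_smul_pow {E ι : Type*} [NormedAddCommGroup E] [NormedSpace ℝ E]
    [Fintype ι] [DecidableEq ι] (v : ι → E) (c lam : ι → ℝ) {i : ι} (hv : c i • v i ≠ 0)
    (hlam : 0 < lam i) (hgap : ∀ a ≠ i, |lam a| < lam i) :
    Tendsto (fun k : ℕ => normalize (∑ a, (c a * lam a ^ k) • v a)) atTop
      (𝓝 (normalize (c i • v i))) := by
  have hterm : ∀ a, Tendsto (fun k : ℕ => (c a * (lam a / lam i) ^ k) • v a) atTop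
      (𝓝 (if a = i then c i • v i else 0)) := by
    intro a
    split_ifs with ha
    · subst ha
      simp [div_self hlam.ne']
    · simpa using ((tendsto_pow_div_pow_of_abs_lt (hgap a ha)).const_mul (c a)).smul_const (v a)
  have hsum := tendsto_finsetSum Finset.univ fun a _ => hterm a
  rw [Finset.sum_ite_eq' Finset.univ i, if_pos (Finset.mem_univ i)] at hsum
  have hscale : ∀ k : ℕ, ∑ a, (c a * lam a ^ k) • v a
      = lam i ^ k • ∑ a, (c a * (lam a / lam i) ^ k) • v a := by
    intro k
    rw [Finset.smul_sum]
    refine Finset.sum_congr rfl fun a _ => ?_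
    rw [smul_smul, div_pow]
    field_simp
  simp_rw [hscale, normalize_smul_of_pos (pow_pos hlam _)]
  exact (continuousAt_normalize hv).tendsto.comp hsum

theorem EuclideanSpace.norm_toLp_eq_sqrt {ι : Type*} [Fintype ι] (y : ι → ℝ) :
    ‖WithLp.toLp 2 y‖ = √(∑ i, y i ^ 2) := by
  simp [EuclideanSpace.norm_eq]

/-- Power iteration. Let `M` be a real matrix with orthonormal
eigenvectors `ν 0, ..., ν (n-1)` and real eigenvalues with `lam 0 > |lam a|` for all
`a ≠ 0`. If `x = ∑ c a • ν a` with `c 0 ≠ 0`, then the normalized iterates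
`M^k x / ‖M^k x‖` converge to `sign (c 0) • ν 0`: for every `ε > 0` there is `K` such
that for all `k ≥ K` the Euclidean distance is less than `ε`. -/
theorem power_iteration_convergence (n : ℕ) (hn : 1 < n) [NeZero n]
    (M : Matrix (Fin n) (Fin n) ℝ) (ν : Fin n → Fin n → ℝ) (lam : Fin n → ℝ)
    (horth : ∀ a b : Fin n, (∑ i, ν a i * ν b i) = if a = b then (1 : ℝ) else 0)
    (heig : ∀ a : Fin n, M.mulVec (ν a) = lam a • ν a)
    (hgap : ∀ a : Fin n, a ≠ 0 → |lam a| < lam 0)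
    (c : Fin n → ℝ) (x : Fin n → ℝ) (hx : x = ∑ a, c a • ν a) (hc : c 0 ≠ 0) :
    ∀ ε > 0, ∃ K : ℕ, ∀ k ≥ K,
      Real.sqrt (∑ i,
        ((Real.sqrt (∑ i', ((M ^ k).mulVec x i') ^ 2))⁻¹ • (M ^ k).mulVec x
          - Real.sign (c 0) • ν 0) i ^ 2) < ε := by
  have hlam0 : 0 < lam 0 := (abs_nonneg _).trans_lt (hgap ⟨1, hn⟩ (by simp [Fin.ext_iff]))
  have hν0 : ‖WithLp.toLp 2 (ν 0)‖ = 1 := by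
    simpa [EuclideanSpace.norm_toLp_eq_sqrt, sq] using congrArg Real.sqrt (horth 0 0)
  have hlim : Tendsto (fun k => normalize (WithLp.toLp 2 ((M ^ k) *ᵥ x))) atTop
      (𝓝 (Real.sign (c 0) • WithLp.toLp 2 (ν 0))) := by
    have hv0 : c 0 • WithLp.toLp 2 (ν 0) ≠ 0 :=
      smul_ne_zero hc (norm_ne_zero_iff.1 (by rw [hν0]; exact one_ne_zero))
    have hdominant := tendsto_normalize_sum_smul_pow (fun a => WithLp.toLp 2 (ν a)) c lam hv0 hlam0 hgap
    rw [normalize_smul_eq_sign_smul, normalize_eq_self_of_norm_eq_one hν0] at hdominant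
    simpa [hx, Matrix.pow_mulVec_sum_smul M ν lam heig, WithLp.toLp_sum] using hdominant
  intro ε hε
  obtain ⟨K, hK⟩ := Metric.tendsto_atTop.1 hlim ε hε
  refine ⟨K, fun k hk => ?_⟩
  have hdist := hK k hk
  rwa [dist_eq_norm, NormedSpace.normalize, EuclideanSpace.norm_toLp_eq_sqrt, ← WithLp.toLp_smul,
    ← WithLp.toLp_smul, ← WithLp.toLp_sub, EuclideanSpace.norm_toLp_eq_sqrt] at hdist
end

section
/- For a tree G with edge (i,j) and node i of degree d_i ≥ 2, combining the expected number of failures (d_i−1)^2/d_i of the begrudgingly backtracking walk with its per-failure penalty 2|E(G_i)|/(d_i−1) (the BBRW return time of i in G_i) yields total expected penalty 2|E(G_i)|(d_i−1)/d_i, so the BBRW access time t̃(i,j) = 1 + 2|E(G_i)|(d_i−1)/d_i ≤ 1 + 2|E(G_i)| = t(i,j), the SRW access time. -/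
/-!
Let `A` be the vertex set of `G_i`. Since `ij` is a bridge, it is the only edge leaving `A`, and
the degrees over `A` sum to `2|E(G_i)| + 1`. Both access times come from summing the first-step
recurrences over the directed edges inside `A` and exchanging the order of summation: each
such edge is counted once as leaving and once as entering a vertex, so everything cancels except
the exit edge `ij`. For the SRW this gives `t(i,j) = ∑_{a ∈ A} d_a`. For the BBRW, at each
vertex the next-step means summed over all ways of entering it equal the hitting times summed
over all ways of leaving it; after the cancellation, the mean after entering `i` from `j`, namely
`(∑_{l ≠ j} nb(i,l,j)) / (d_i - 1)`, is again `∑_{a ∈ A} d_a`.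
-/

open Finset

/-- The number of edges of `G'` lying in the connected component of node `i`. -/
noncomputable def compEdgeCount {V : Type*} (G' : SimpleGraph V) (i : V) : ℕ :=
  {e ∈ G'.edgeSet | ∀ v ∈ e, G'.Reachable i v}.ncard

namespace SimpleGraph

structure IsSoleExit {V : Type*} (G : SimpleGraph V) (A : Finset V) (i j : V) : Prop where
  adj : G.Adj i j
  left_mem : i ∈ A
  right_notMem : j ∉ A
  eq_of_adj_of_notMem : ∀ a ∈ A, ∀ b, G.Adj a b → b ∉ A → a = i ∧ b = j

variable {V : Type*} [Fintype V] {G : SimpleGraph V} [DecidableRel G.Adj]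

theorem degree_mul_inv_degree_mul_sum (a : V) (f : V → ℝ) :
    (G.degree a : ℝ) * ((G.degree a : ℝ)⁻¹ * ∑ k ∈ G.neighborFinset a, f k)
      = ∑ k ∈ G.neighborFinset a, f k := by
  rcases eq_or_ne (G.degree a) 0 with h | h
  · rw [← card_neighborFinset_eq_degree, card_eq_zero] at h
    simp [h]
  · exact mul_inv_cancel_left₀ (Nat.cast_ne_zero.mpr h) _

variable [DecidableEq V]

theorem sum_sum_neighborFinset_inter_comm {M : Type*} [AddCommMonoid M] (A : Finset V)
    (g : V → V → M) :
    ∑ a ∈ A, ∑ b ∈ G.neighborFinset a ∩ A, g a b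
      = ∑ b ∈ A, ∑ a ∈ G.neighborFinset b ∩ A, g a b :=
  sum_comm' (by simp [and_comm, adj_comm, and_left_comm])

/-- The mean of `f b l` over the next BBRW step `b → l` after arriving at `b` from `a`: a uniform
neighbour other than `a`, except that a leaf sends the walk back to `a`. -/
noncomputable def bbrwNextMean (G : SimpleGraph V) [DecidableRel G.Adj] (f : V → V → ℝ)
    (a b : V) : ℝ :=
  if G.degree b = 1 then f b a
  else ((G.degree b : ℝ) - 1)⁻¹ * ∑ l ∈ G.neighborFinset b \ {a}, f b l

theorem sum_bbrwNextMean (f : V → V → ℝ) (b : V) :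
    ∑ a ∈ G.neighborFinset b, bbrwNextMean G f a b = ∑ l ∈ G.neighborFinset b, f b l := by
  obtain h0 | h1 | h2 : G.degree b = 0 ∨ G.degree b = 1 ∨ 2 ≤ G.degree b := by omega
  · rw [← card_neighborFinset_eq_degree, card_eq_zero] at h0
    simp [h0]
  · obtain ⟨a, ha⟩ := card_eq_one.mp ((card_neighborFinset_eq_degree G b).trans h1)
    simp [ha, bbrwNextMean, h1]
  · have hd : (G.degree b : ℝ) - 1 ≠ 0 := by
      have : (2 : ℝ) ≤ G.degree b := by exact_mod_cast h2
      linarith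
    have hterm : ∀ a ∈ G.neighborFinset b, bbrwNextMean G f a b
        = ((G.degree b : ℝ) - 1)⁻¹ * (∑ l ∈ G.neighborFinset b, f b l - f b a) := by
      intro a ha
      rw [bbrwNextMean, if_neg (by omega), sdiff_singleton_eq_erase, sum_erase_eq_sub ha]
    rw [sum_congr rfl hterm, ← mul_sum, sum_sub_distrib, sum_const, card_neighborFinset_eq_degree,
      nsmul_eq_mul, ← sub_one_mul, inv_mul_cancel_left₀ hd]

theorem eq_one_add_bbrwNextMean {f : V → V → ℝ} {a b : V} (hab : G.Adj a b)
    (hleaf : G.degree b = 1 → f a b = 1 + f b a)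
    (hinner : 1 < G.degree b →
      f a b = 1 + ((G.degree b : ℝ) - 1)⁻¹ * ∑ l ∈ G.neighborFinset b \ {a}, f b l) :
    f a b = 1 + bbrwNextMean G f a b := by
  have hpos := hab.degree_pos_right
  unfold bbrwNextMean
  split_ifs with h1
  exacts [hleaf h1, hinner (by omega)]

namespace IsSoleExit

variable {A : Finset V} {i j : V}

theorem neighborFinset_sdiff (h : G.IsSoleExit A i j) {a : V} (ha : a ∈ A) :
    G.neighborFinset a \ A = if a = i then {j} else ∅ := by
  ext b
  have := h.eq_of_adj_of_notMem a ha b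
  have := h.adj
  have := h.right_notMem
  split_ifs <;> simp only [mem_sdiff, mem_neighborFinset, mem_singleton, notMem_empty] <;> grind

theorem sum_sum_neighborFinset_inter {M : Type*} [AddCommGroup M] (h : G.IsSoleExit A i j)
    (g : V → V → M) :
    ∑ a ∈ A, ∑ k ∈ G.neighborFinset a ∩ A, g a k
      = ∑ a ∈ A, ∑ k ∈ G.neighborFinset a, g a k - g i j := by
  have hsplit : ∀ a ∈ A, ∑ k ∈ G.neighborFinset a, g a k
      = ∑ k ∈ G.neighborFinset a ∩ A, g a k + if a = i then g i j else 0 := by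
    intro a ha
    rw [← sum_inter_add_sum_sdiff _ A, h.neighborFinset_sdiff ha]
    split_ifs with hai <;> simp [hai]
  rw [sum_congr rfl hsplit, sum_add_distrib, sum_ite_eq' A i, if_pos h.left_mem,
    add_sub_cancel_right]

theorem sum_card_neighborFinset_inter (h : G.IsSoleExit A i j) :
    ∑ a ∈ A, (#(G.neighborFinset a ∩ A) : ℝ) = ∑ a ∈ A, (G.degree a : ℝ) - 1 := by
  simpa using h.sum_sum_neighborFinset_inter (fun _ _ => (1 : ℝ))

theorem hitting_eq_sum_degree (h : G.IsSoleExit A i j) (t : V → ℝ) (ht0 : t j = 0)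
    (hstep : ∀ a ∈ A, t a = 1 + (G.degree a : ℝ)⁻¹ * ∑ k ∈ G.neighborFinset a, t k) :
    t i = ∑ a ∈ A, (G.degree a : ℝ) := by
  have hflow : ∑ a ∈ A, (G.degree a : ℝ) * t a
      = ∑ a ∈ A, (G.degree a : ℝ) + ∑ a ∈ A, ∑ k ∈ G.neighborFinset a, t k := by
    rw [← sum_add_distrib]
    refine sum_congr rfl fun a ha => ?_
    rw [hstep a ha, mul_add, mul_one, degree_mul_inv_degree_mul_sum]
  have hin : ∑ a ∈ A, ∑ k ∈ G.neighborFinset a, t k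
      = ∑ a ∈ A, (G.degree a : ℝ) * t a - t i := by
    have h1 := h.sum_sum_neighborFinset_inter (fun _ k => t k)
    have h2 := h.sum_sum_neighborFinset_inter (fun k _ => t k)
    rw [sum_sum_neighborFinset_inter_comm] at h1
    simp only [sum_const, card_neighborFinset_eq_degree, nsmul_eq_mul] at h1 h2
    linear_combination h2 - h1 + ht0
  linarith

theorem bbrwNextMean_eq_sum_degree (h : G.IsSoleExit A i j) (f : V → V → ℝ) (hfij : f i j = 1)
    (hstep : ∀ a ∈ A, ∀ b ∈ A, G.Adj a b → f a b = 1 + bbrwNextMean G f a b) :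
    bbrwNextMean G f j i = ∑ a ∈ A, (G.degree a : ℝ) := by
  have hsplit : ∑ a ∈ A, ∑ b ∈ G.neighborFinset a ∩ A, f a b
      = ∑ a ∈ A, (#(G.neighborFinset a ∩ A) : ℝ)
        + ∑ a ∈ A, ∑ b ∈ G.neighborFinset a ∩ A, bbrwNextMean G f a b := by
    rw [← sum_add_distrib]
    refine sum_congr rfl fun a ha => ?_
    have hterm : ∀ b ∈ G.neighborFinset a ∩ A, f a b = 1 + bbrwNextMean G f a b := fun b hb =>
      hstep a ha b (mem_inter.mp hb).2 ((mem_neighborFinset _ _ _).mp (mem_inter.mp hb).1)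
    rw [sum_congr rfl hterm, sum_add_distrib, sum_const, nsmul_one]
  have hmean := h.sum_sum_neighborFinset_inter (fun b a => bbrwNextMean G f a b)
  have hout := h.sum_sum_neighborFinset_inter f
  have hswap := sum_sum_neighborFinset_inter_comm (G := G) A (bbrwNextMean G f)
  simp only [sum_bbrwNextMean] at hmean
  linear_combination hsplit + hswap + hmean - hout + h.sum_card_neighborFinset_inter + hfij

theorem sum_bbrw_eq (h : G.IsSoleExit A i j) (f : V → V → ℝ) (hfij : f i j = 1)
    (hdi : 2 ≤ G.degree i)
    (hstep : ∀ a ∈ A, ∀ b ∈ A, G.Adj a b → f a b = 1 + bbrwNextMean G f a b) :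
    ∑ l ∈ G.neighborFinset i, f i l
      = ((G.degree i : ℝ) - 1) * ∑ a ∈ A, (G.degree a : ℝ) + 1 := by
  have hd : (G.degree i : ℝ) - 1 ≠ 0 := by
    have : (2 : ℝ) ≤ G.degree i := by exact_mod_cast hdi
    linarith
  rw [← h.bbrwNextMean_eq_sum_degree f hfij hstep, bbrwNextMean, if_neg (by omega),
    sdiff_singleton_eq_erase, sum_erase_eq_sub (mem_neighborFinset _ _ _ |>.mpr h.adj), hfij,
    mul_inv_cancel_left₀ hd, sub_add_cancel]

end IsSoleExit

theorem two_mul_compEdgeCount (H : SimpleGraph V) [DecidableRel H.Adj] (i : V) :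
    2 * compEdgeCount H i = ∑ a ∈ univ.filter (H.Reachable i), H.degree a := by
  classical
  set K := fromEdgeSet {e ∈ H.edgeSet | ∀ v ∈ e, H.Reachable i v}
  have hK : K.edgeSet = {e ∈ H.edgeSet | ∀ v ∈ e, H.Reachable i v} := by
    rw [edgeSet_fromEdgeSet, sdiff_eq_left.mpr]
    exact Set.disjoint_left.mpr fun e he => H.not_isDiag_of_mem_edgeSet he.1
  have hdeg : ∀ a, K.degree a = if H.Reachable i a then H.degree a else 0 := by
    intro a
    rw [← card_neighborFinset_eq_degree, ← card_neighborFinset_eq_degree]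
    split_ifs with ha
    · congr 1
      ext b
      simp only [mem_neighborFinset, fromEdgeSet_adj, Set.mem_ofPred_eq, mem_edgeSet,
        Sym2.forall_mem_pair, K]
      exact ⟨fun h => h.1.1, fun h => ⟨⟨h, ha, ha.trans h.reachable⟩, h.ne⟩⟩
    · refine card_eq_zero.mpr (eq_empty_of_forall_notMem fun b hb => ha ?_)
      simp only [mem_neighborFinset, fromEdgeSet_adj, Set.mem_ofPred_eq, K] at hb
      exact hb.1.2 a (Sym2.mem_mk_left a b)
  rw [compEdgeCount, ← hK, ← coe_edgeFinset, Set.ncard_coe_finset, sum_filter]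
  convert K.sum_degrees_eq_twice_card_edges.symm using 3 with a
  · congr!
  · exact (hdeg a).symm

variable {i j : V}

theorem isSoleExit_of_isBridge (hij : G.Adj i j) (hb : G.IsBridge s(i, j)) :
    G.IsSoleExit (univ.filter ((G.deleteEdges {s(i, j)}).Reachable i)) i j where
  adj := hij
  left_mem := by simp
  right_notMem := by simpa [isBridge_iff] using hb
  eq_of_adj_of_notMem a ha b hab hbA := by
    simp only [mem_filter, mem_univ, true_and] at ha hbA
    by_cases he : s(a, b) = s(i, j)
    · rcases Sym2.eq_iff.mp he with h | ⟨rfl, rfl⟩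
      · exact h
      · exact absurd ha hb
    · exact absurd (ha.trans (deleteEdges_adj.mpr ⟨hab, by simpa using he⟩).reachable) hbA

theorem sum_degree_eq_two_mul_compEdgeCount_add_one (hij : G.Adj i j)
    (hb : G.IsBridge s(i, j)) :
    ∑ a ∈ univ.filter ((G.deleteEdges {s(i, j)}).Reachable i), (G.degree a : ℝ)
      = 2 * (compEdgeCount (G.deleteEdges {s(i, j)}) i : ℝ) + 1 := by
  set A := univ.filter ((G.deleteEdges {s(i, j)}).Reachable i)
  have hexit := isSoleExit_of_isBridge hij hb
  have hnbr : ∀ a ∈ A,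
      (G.deleteEdges {s(i, j)}).neighborFinset a = G.neighborFinset a ∩ A := by
    intro a ha
    ext b
    simp only [mem_neighborFinset, deleteEdges_adj, mem_inter, Set.mem_singleton_iff]
    constructor
    · rintro ⟨hab, hne⟩
      have hreach := (mem_filter.mp ha).2.trans (deleteEdges_adj.mpr ⟨hab, hne⟩).reachable
      exact ⟨hab, mem_filter.mpr ⟨mem_univ b, hreach⟩⟩
    · rintro ⟨hab, hbA⟩
      refine ⟨hab, fun he => ?_⟩
      rcases Sym2.eq_iff.mp he with ⟨-, rfl⟩ | ⟨rfl, -⟩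
      exacts [hexit.right_notMem hbA, hexit.right_notMem ha]
  calc ∑ a ∈ A, (G.degree a : ℝ) = ∑ a ∈ A, (#(G.neighborFinset a ∩ A) : ℝ) + 1 := by
        rw [hexit.sum_card_neighborFinset_inter, sub_add_cancel]
    _ = ∑ a ∈ A, ((G.deleteEdges {s(i, j)}).degree a : ℝ) + 1 := by
        refine congrArg (· + 1) (sum_congr rfl fun a ha => ?_)
        rw [← card_neighborFinset_eq_degree, hnbr a ha]
    _ = 2 * (compEdgeCount (G.deleteEdges {s(i, j)}) i : ℝ) + 1 := by
        rw [← Nat.cast_sum, ← two_mul_compEdgeCount, Nat.cast_mul, Nat.cast_two]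

end SimpleGraph

/-- `t a b` is the SRW hitting time of `b` from `a`, and `nb a b k` the BBRW hitting time of `k`
from `a` when the first step goes to `b`, each given by its first-step recurrences. -/
theorem bbrw_vs_srw_adjacent
    {V : Type*} [Fintype V] [DecidableEq V] (G : SimpleGraph V) [DecidableRel G.Adj]
    (hG : G.IsTree) (i j : V) (hij : G.Adj i j) (hdi : 2 ≤ G.degree i)
    (t : V → V → ℝ)
    (ht0 : ∀ b, t b b = 0)
    (htstep : ∀ a b : V, a ≠ b →
      t a b = 1 + ((G.degree a : ℝ))⁻¹ * ∑ k ∈ G.neighborFinset a, t k b)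
    (nb : V → V → V → ℝ)
    (hnb1 : ∀ a b : V, G.Adj a b → nb a b b = 1)
    (hnb2 : ∀ a b k : V, G.Adj a b → b ≠ k → G.degree b = 1 → nb a b k = 1 + nb b a k)
    (hnb3 : ∀ a b k : V, G.Adj a b → b ≠ k → 1 < G.degree b →
      nb a b k = 1 + ((G.degree b : ℝ) - 1)⁻¹ * ∑ l ∈ G.neighborFinset b \ {a}, nb b l k) :
    (((G.degree i : ℝ))⁻¹ * ∑ l ∈ G.neighborFinset i, nb i l j
        = 1 + 2 * (compEdgeCount (G.deleteEdges {Sym2.mk i j}) i : ℝ)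
            * ((G.degree i : ℝ) - 1) / (G.degree i : ℝ)) ∧
    (((G.degree i : ℝ))⁻¹ * ∑ l ∈ G.neighborFinset i, nb i l j
        ≤ 1 + 2 * (compEdgeCount (G.deleteEdges {Sym2.mk i j}) i : ℝ)) ∧
    (t i j = 1 + 2 * (compEdgeCount (G.deleteEdges {Sym2.mk i j}) i : ℝ)) := by
  have hbridge := SimpleGraph.isAcyclic_iff_forall_adj_isBridge.mp hG.isAcyclic hij
  set A := univ.filter ((G.deleteEdges {s(i, j)}).Reachable i)
  have hexit : G.IsSoleExit A i j := SimpleGraph.isSoleExit_of_isBridge hij hbridge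
  have hD := SimpleGraph.sum_degree_eq_two_mul_compEdgeCount_add_one hij hbridge
  have ht : t i j = ∑ a ∈ A, (G.degree a : ℝ) :=
    hexit.hitting_eq_sum_degree (t · j) (ht0 j) fun a ha =>
      htstep a j (ne_of_mem_of_not_mem ha hexit.right_notMem)
  have hT : ∑ l ∈ G.neighborFinset i, nb i l j
      = ((G.degree i : ℝ) - 1) * ∑ a ∈ A, (G.degree a : ℝ) + 1 :=
    hexit.sum_bbrw_eq (nb · · j) (hnb1 i j hij) hdi fun a _ b hb hab =>
      have hbj := ne_of_mem_of_not_mem hb hexit.right_notMem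
      SimpleGraph.eq_one_add_bbrwNextMean (f := (nb · · j)) hab (hnb2 a b j hab hbj)
        (hnb3 a b j hab hbj)
  have hd : (2 : ℝ) ≤ G.degree i := by exact_mod_cast hdi
  have hm : (0 : ℝ) ≤ compEdgeCount (G.deleteEdges {Sym2.mk i j}) i := Nat.cast_nonneg _
  have hBBRW : (G.degree i : ℝ)⁻¹ * ∑ l ∈ G.neighborFinset i, nb i l j
      = 1 + 2 * (compEdgeCount (G.deleteEdges {Sym2.mk i j}) i : ℝ)
        * ((G.degree i : ℝ) - 1) / (G.degree i : ℝ) := by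
    rw [hT, hD]
    field_simp
    ring
  refine ⟨hBBRW, ?_, by rw [ht, hD]; ring⟩
  rw [hBBRW, add_le_add_iff_left, div_le_iff₀ (by linarith)]
  nlinarith
end
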